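/- For any fixed delta in (0,1), the W-ary entropy function H_W(delta) = delta*log_W(W-1) - delta*log_W(delta) - (1-delta)*log_W(1-delta) is strictly decreasing in W for all integers W >= max{2, (1-delta)^{-1}}. -/

import Mathlib

/-!
Relax `W` to a real variable `x > 1`: `H_x(δ) = (δ log (x - 1) + h(δ)) / log x`, with `h` the
binary entropy in nats. Its `x`-derivative is negative exactly when
`δ (x log x - (x - 1) log (x - 1)) < (x - 1) h(δ)`, and since
`x log x - (x - 1) log (x - 1) = x h(1/x)` this says `h(1/x) / (1 - 1/x) < h(1 - δ) / δ`.
That is the comparison of the slopes of the chords of the strictly concave `h` from `1/x` and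
from `1 - δ` to the zero `h(1) = 0`, valid because `1/x < 1 - δ`.
-/

/-- The `W`-ary entropy function
`H_W(δ) = δ·log_W(W-1) - δ·log_W δ - (1-δ)·log_W(1-δ)`, with `log_W x = log x / log W`. -/
noncomputable def entW (W : ℕ) (δ : ℝ) : ℝ :=
  δ * (Real.log ((W : ℝ) - 1) / Real.log W)
    - δ * (Real.log δ / Real.log W)
    - (1 - δ) * (Real.log (1 - δ) / Real.log W)

open Real Set

lemma binEntropy_div_one_sub_lt {s t : ℝ} (hs : 0 ≤ s) (hst : s < t) (ht : t < 1) :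
    binEntropy s / (1 - s) < binEntropy t / (1 - t) := by
  have hchord := strictConcave_binEntropy.secant_strict_mono (a := 1) ⟨zero_le_one, le_rfl⟩
    ⟨hs, (hst.trans ht).le⟩ ⟨hs.trans hst.le, ht.le⟩ (hst.trans ht).ne ht.ne hst
  rwa [binEntropy_one, sub_zero, sub_zero, ← neg_sub 1 t, ← neg_sub 1 s, div_neg, div_neg,
    neg_lt_neg_iff] at hchord

lemma mul_binEntropy_inv {x : ℝ} (hx : 1 < x) :
    x * binEntropy x⁻¹ = x * log x - (x - 1) * log (x - 1) := by
  have hx₀ : x ≠ 0 := by positivity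
  have hx₁ : x - 1 ≠ 0 := sub_ne_zero.2 hx.ne'
  rw [binEntropy, inv_inv, show 1 - x⁻¹ = (x - 1) / x by field_simp, inv_div,
    log_div hx₀ hx₁]
  field_simp
  ring

lemma mul_mul_log_lt_of_inv_lt_one_sub {δ x : ℝ} (hδ : 0 < δ) (hx : 1 < x)
    (hxδ : x⁻¹ < 1 - δ) :
    δ * x * log x < (x - 1) * (δ * log (x - 1) + binEntropy δ) := by
  have hslope := binEntropy_div_one_sub_lt (by positivity) hxδ (by linarith)
  rw [binEntropy_one_sub, sub_sub_cancel,
    show 1 - x⁻¹ = (x - 1) / x by field_simp, div_div_eq_mul_div, mul_comm _ x,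
    mul_binEntropy_inv hx,
    div_lt_div_iff₀ (by linarith) hδ] at hslope
  linarith

noncomputable def entReal (x δ : ℝ) : ℝ := (δ * log (x - 1) + binEntropy δ) / log x

lemma entW_eq_entReal (W : ℕ) (δ : ℝ) : entW W δ = entReal W δ := by
  rw [entW, entReal, binEntropy, log_inv, log_inv]
  ring

lemma hasDerivAt_entReal (δ : ℝ) {x : ℝ} (hx : 1 < x) :
    HasDerivAt (fun y => entReal y δ)
      ((δ / (x - 1) * log x - (δ * log (x - 1) + binEntropy δ) * x⁻¹) / log x ^ 2) x := by
  have hnum : HasDerivAt (fun y => δ * log (y - 1) + binEntropy δ) (δ / (x - 1)) x := by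
    simpa [div_eq_mul_inv] using
      ((((hasDerivAt_id x).sub_const 1).log (sub_ne_zero.2 hx.ne')).const_mul δ).add_const
        (binEntropy δ)
  exact hnum.div (hasDerivAt_log (by positivity)) (log_pos hx).ne'

lemma entReal_strictAntiOn {δ : ℝ} (hδ : δ ∈ Ioo 0 1) :
    StrictAntiOn (fun x => entReal x δ) (Ici (1 - δ)⁻¹) := by
  have hone : ∀ x ∈ Ici (1 - δ)⁻¹, 1 < x := fun x hx =>
    (one_lt_inv₀ (by linarith [hδ.2])).2 (by linarith [hδ.1]) |>.trans_le hx
  refine strictAntiOn_of_deriv_neg (convex_Ici _)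
    (fun x hx => (hasDerivAt_entReal δ (hone x hx)).continuousAt.continuousWithinAt) ?_
  rw [interior_Ici]
  intro x hx
  have hx₁ : 1 < x := hone x (mem_Ici.2 (mem_Ioi.1 hx).le)
  have hxδ : x⁻¹ < 1 - δ := by
    simpa using inv_strictAnti₀ (inv_pos.2 (by linarith [hδ.2])) (mem_Ioi.1 hx)
  have hkey := mul_mul_log_lt_of_inv_lt_one_sub hδ.1 hx₁ hxδ
  rw [(hasDerivAt_entReal δ hx₁).deriv]
  refine div_neg_of_neg_of_pos ?_ (pow_pos (log_pos hx₁) 2)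
  rw [sub_neg, div_mul_eq_mul_div, ← div_eq_mul_inv,
    div_lt_div_iff₀ (by linarith) (by linarith)]
  linarith

/-- For fixed `δ ∈ (0,1)`, the `W`-ary entropy `H_W(δ)` is strictly decreasing in the
integer `W` on the range `W ≥ max {2, (1-δ)⁻¹}`. -/
theorem entW_strictAnti_in_W (δ : ℝ) (hδ : δ ∈ Set.Ioo (0 : ℝ) 1) :
    ∀ W W' : ℕ, 2 ≤ W → (1 - δ)⁻¹ ≤ (W : ℝ) → W < W' → entW W' δ < entW W δ := by
  intro W W' _ hW hWW'
  have hWW'ℝ : (W : ℝ) < W' := by exact_mod_cast hWW'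
  rw [entW_eq_entReal, entW_eq_entReal]
  exact entReal_strictAntiOn hδ hW (mem_Ici.2 (hW.trans hWW'ℝ.le)) hWW'ℝ
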